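/- arXiv:2307.03870 — 2 statements merged into one kernel-verified Lean document; each statement's English description precedes it below -/
import Mathlib

section
/- For every EFA E_m of step-length m > 1 over event-parameter domain X there exists an EFA E₁ of step-length 1 (possibly over a different state-parameter domain) that is data-equivalent to E_m, i.e. L_fmd(E₁) = L_fmd(E_m). -/
attribute [local instance] Classical.propDecidable

universe u v w

/-- A symbolic transition of an EP-EFA: source and target states, event tag,
step-length, and a guard given by its denotation (a set of parameter tuples
of length `len`). -/
structure SymTrans (Q : Type u) (E : Type v) (X : Type w) where
  src : Q
  tgt : Q
  tag : E
  len : ℕ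
  guard : Set (List X)
  guard_len : ∀ l ∈ guard, l.length = len

/-- An Event-Parameters Extended Finite Automaton (EP-EFA): initial states,
marked states, and a set of symbolic transitions. -/
structure EPEFA (Q : Type u) (E : Type v) (X : Type w) where
  init : Set Q
  marked : Set Q
  trans : Set (SymTrans Q E X)

variable {Q : Type u} {E : Type v} {X : Type w}

/-- The flat data string of a parameterized string: the concatenation of all
parameter values in order. -/
def flatData (u : List (E × List X)) : List X := (u.map Prod.snd).flatten

/-- The reverse of a parameterized string: events in reverse order, each
parameter tuple reversed. -/
def strRev (u : List (E × List X)) : List (E × List X) :=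
  (u.map fun ev => (ev.1, ev.2.reverse)).reverse

/-- The reverse of a data string / observation: tuples in reverse order, each
tuple reversed. -/
def obsRev (w : List (List X)) : List (List X) := (w.map List.reverse).reverse

/-- The observation `θ(D(u))` of a parameterized string `u`, determined by the
observability set `ϑ`: strip event tags, delete unobservable parameter values,
drop empty tuples. -/
noncomputable def obsOf (ϑ : Set X) (u : List (E × List X)) : List (List X) :=
  ((u.map Prod.snd).map fun l => l.filter fun a => a ∈ ϑ).filter fun l => l ≠ []

/-- A parameterized event `ev` triggers a concrete transition from `q` to `q'`. -/
def EPEFA.Step (S : EPEFA Q E X) (q : Q) (ev : E × List X) (q' : Q) : Prop :=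
  ∃ t ∈ S.trans, t.src = q ∧ t.tgt = q' ∧ t.tag = ev.1 ∧ ev.2 ∈ t.guard

/-- `S.Path q u q'` : the parameterized string `u` labels a chain of concrete
transitions from `q` to `q'` (with `q →ε q` always). -/
inductive EPEFA.Path (S : EPEFA Q E X) : Q → List (E × List X) → Q → Prop
  | nil (q : Q) : EPEFA.Path S q [] q
  | cons {q q' q'' : Q} {ev : E × List X} {u : List (E × List X)} :
      S.Step q ev q' → EPEFA.Path S q' u q'' → EPEFA.Path S q (ev :: u) q''

/-- The language between a set of source states and a set of target states. -/
def EPEFA.LBtw (S : EPEFA Q E X) (Q1 Q2 : Set Q) : Set (List (E × List X)) :=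
  {u | ∃ q1 ∈ Q1, ∃ q2 ∈ Q2, S.Path q1 u q2}

/-- The generated language `L(S)`. -/
def EPEFA.Lang (S : EPEFA Q E X) : Set (List (E × List X)) :=
  S.LBtw S.init Set.univ

/-- The marked language `L_m(S)`. -/
def EPEFA.LangM (S : EPEFA Q E X) : Set (List (E × List X)) :=
  S.LBtw S.init S.marked

/-- The flat marked data language `L_fmd(S)`. -/
def EPEFA.Lfmd (S : EPEFA Q E X) : Set (List X) := flatData '' S.LangM

/-- The set of observations `Θ(S)`. -/
def EPEFA.ThetaSet (S : EPEFA Q E X) (ϑ : Set X) : Set (List (List X)) :=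
  obsOf ϑ '' S.Lang

/-- The state estimation `Est^S(w)`. -/
def EPEFA.Est (S : EPEFA Q E X) (ϑ : Set X) (w : List (List X)) : Set Q :=
  {q | ∃ q0 ∈ S.init, ∃ u, S.Path q0 u q ∧ obsOf ϑ u = w}

/-- The reverse of a symbolic transition: source and target swapped, guard
denotation reversed tuple-wise. -/
def SymTrans.rev (t : SymTrans Q E X) : SymTrans Q E X where
  src := t.tgt
  tgt := t.src
  tag := t.tag
  len := t.len
  guard := {l | l.reverse ∈ t.guard}
  guard_len := fun l hl => by simpa using t.guard_len l.reverse hl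

/-- The reverse EP-EFA `Sʳ`: all states initial, reversed transitions. -/
def EPEFA.rev (S : EPEFA Q E X) : EPEFA Q E X where
  init := Set.univ
  marked := S.init
  trans := SymTrans.rev '' S.trans

/-- Current-state opacity of `S` w.r.t. secret states `Qs`, non-secret states
`Qns` and the observation function determined by `ϑ`. -/
def EPEFA.CSOpaque (S : EPEFA Q E X) (ϑ : Set X) (Qs Qns : Set Q) : Prop :=
  ∀ u ∈ S.LBtw S.init Qs, ∃ v ∈ S.LBtw S.init Qns, obsOf ϑ u = obsOf ϑ v

/-- Initial-state opacity of `S` w.r.t. secret initial states `Qs`, non-secret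
initial states `Qns` and the observation function determined by `ϑ`. -/
def EPEFA.ISOpaque (S : EPEFA Q E X) (ϑ : Set X) (Qs Qns : Set Q) : Prop :=
  ∀ u ∈ S.LBtw Qs Set.univ, ∃ v ∈ S.LBtw Qns Set.univ, obsOf ϑ u = obsOf ϑ v

/-- Infinite-step opacity of `S` w.r.t. secret states `Qs`, non-secret states
`Qns` and the observation function determined by `ϑ`: every run from an
initial state through a secret state is matched, observation-wise (both the
prefix up to the secret state and the suffix), by a run through a non-secret
state. -/
def EPEFA.InfSOpaque (S : EPEFA Q E X) (ϑ : Set X) (Qs Qns : Set Q) : Prop :=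
  ∀ q0 ∈ S.init, ∀ qs ∈ Qs, ∀ (q : Q) (u u2 : List (E × List X)),
    S.Path q0 u qs → S.Path qs u2 q →
    ∃ q0' ∈ S.init, ∃ qn ∈ Qns, ∃ (q' : Q) (v v2 : List (E × List X)),
      S.Path q0' v qn ∧ S.Path qn v2 q' ∧
      obsOf ϑ u = obsOf ϑ v ∧ obsOf ϑ u2 = obsOf ϑ v2

universe y

/-- A symbolic transition of an EFA: source and target state tags, event tag,
step-length, a guard given by its denotation (a set of pairs of a
state-parameter value and a parameter tuple of length `len`), and an update
function for the state parameter. -/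
structure ESymTrans (Q : Type u) (E : Type v) (X : Type w) (Y : Type y) where
  src : Q
  tgt : Q
  tag : E
  len : ℕ
  guard : Set (Y × List X)
  guard_len : ∀ p ∈ guard, p.2.length = len
  update : Y → List X → Y

/-- An Extended Finite Automaton (EFA): initial and marked state tags, initial
state-parameter values, and a set of symbolic transitions. -/
structure EFA (Q : Type u) (E : Type v) (X : Type w) (Y : Type y) where
  init : Set Q
  marked : Set Q
  initY : Set Y
  trans : Set (ESymTrans Q E X Y)

variable {Y : Type y}

/-- A parameterized event `ev` triggers a concrete transition between
configurations (state tag, state-parameter value) of the EFA `A`. -/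
def EFA.Step (A : EFA Q E X Y) (c : Q × Y) (ev : E × List X) (c' : Q × Y) : Prop :=
  ∃ r ∈ A.trans, r.src = c.1 ∧ r.tgt = c'.1 ∧ r.tag = ev.1 ∧
    (c.2, ev.2) ∈ r.guard ∧ c'.2 = r.update c.2 ev.2

/-- `A.Path c u c'` : the parameterized string `u` labels a chain of concrete
transitions of the EFA `A` from configuration `c` to configuration `c'`. -/
inductive EFA.Path (A : EFA Q E X Y) : Q × Y → List (E × List X) → Q × Y → Prop
  | nil (c : Q × Y) : EFA.Path A c [] c
  | cons {c c' c'' : Q × Y} {ev : E × List X} {u : List (E × List X)} :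
      A.Step c ev c' → EFA.Path A c' u c'' → EFA.Path A c (ev :: u) c''

/-- The marked language `L_m(E)` of an EFA. -/
def EFA.LangM (A : EFA Q E X Y) : Set (List (E × List X)) :=
  {u | ∃ q0 ∈ A.init, ∃ b0 ∈ A.initY, ∃ qm ∈ A.marked, ∃ b : Y,
    A.Path (q0, b0) u (qm, b)}

/-- The flat marked data language `L_fmd(E)` of an EFA. -/
def EFA.Lfmd (A : EFA Q E X Y) : Set (List X) := flatData '' A.LangM

/-! ### Auxiliary development for the step-length reduction -/

lemma flatData_cons (ev : E × List X) (u : List (E × List X)) :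
    flatData (ev :: u) = ev.2 ++ flatData u := by simp [flatData]

lemma flatData_append (u v : List (E × List X)) :
    flatData (u ++ v) = flatData u ++ flatData v := by simp [flatData]

lemma EFA.Path.append {A : EFA Q E X Y} :
    ∀ {c u c'}, A.Path c u c' → ∀ {v c''}, A.Path c' v c'' → A.Path c (u ++ v) c''
  | _, _, _, .nil _, _, _ => fun h2 => h2
  | _, _, _, .cons s p, _, _ => fun h2 => .cons s (p.append h2)

section Reduction

variable (A : EFA Q E X Y) (m : ℕ)

/-- State tags of the reduced EFA. -/
abbrev RQ : Type (max u v w y) := ULift.{max v w y} Q ⊕ (↥A.trans × Fin m)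

/-- Event tags of the reduced EFA. -/
abbrev RE (_A : EFA Q E X Y) : Type (max u v w y) := ULift.{max u w y} E

/-- State-parameter domain of the reduced EFA. -/
abbrev RY (_A : EFA Q E X Y) : Type (max u v w y) := ULift.{max u v} (Y × List X)

/-- Reduced transition for a step-length-0 transition of `A`. -/
def zeroT (r : ↥A.trans) : ESymTrans (RQ A m) (RE A) X (RY A) where
  src := Sum.inl ⟨r.1.src⟩
  tgt := Sum.inl ⟨r.1.tgt⟩
  tag := ⟨r.1.tag⟩
  len := 0
  guard := {p | p.2 = [] ∧ (p.1.down.1, ([] : List X)) ∈ r.1.guard}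
  guard_len := fun p hp => by simp [hp.1]
  update := fun y _ => ⟨(r.1.update y.down.1 [], [])⟩

/-- `i`-th link of the chain of step-length-1 transitions simulating a
transition `r` of `A` of positive step-length. -/
def chainT (r : ↥A.trans) (i : Fin m) : ESymTrans (RQ A m) (RE A) X (RY A) where
  src := if i.val = 0 then Sum.inl ⟨r.1.src⟩ else Sum.inr (r, i)
  tgt := if i.val + 1 = r.1.len then Sum.inl ⟨r.1.tgt⟩ else Sum.inr (r, ⟨(i.val + 1) % m, Nat.mod_lt _ i.pos⟩)
  tag := ⟨r.1.tag⟩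
  len := 1
  guard := {p | p.2.length = 1 ∧
    (i.val + 1 = r.1.len → (p.1.down.1, p.1.down.2 ++ p.2) ∈ r.1.guard)}
  guard_len := fun _ hp => hp.1
  update := fun y l =>
    if i.val + 1 = r.1.len then ⟨(r.1.update y.down.1 (y.down.2 ++ l), [])⟩
    else ⟨(y.down.1, y.down.2 ++ l)⟩

/-- The reduced (step-length ≤ 1) EFA. -/
def red : EFA (RQ A m) (RE A) X (RY A) where
  init := Sum.inl '' (ULift.up '' A.init)
  marked := Sum.inl '' (ULift.up '' A.marked)
  initY := (fun b => (⟨(b, [])⟩ : RY A)) '' A.initY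
  trans := {t | ∃ r : ↥A.trans, r.1.len = 0 ∧ t = zeroT A m r} ∪
           {t | ∃ (r : ↥A.trans) (i : Fin m), i.val < r.1.len ∧ t = chainT A m r i}

lemma flatData_map_single (t : RE A) (l : List X) :
    flatData (l.map fun a => (t, [a])) = l := by
  induction l with
  | nil => rfl
  | cons a l ih => simpa [flatData_cons] using ih

lemma chain_path (r : ↥A.trans) (hr : r.1.len ≤ m) (b : Y) :
    ∀ (rest acc : List X) (i : Fin m), rest ≠ [] →
      i.val + rest.length = r.1.len →
      (b, acc ++ rest) ∈ r.1.guard →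
      (red A m).Path
        ((if i.val = 0 then Sum.inl ⟨r.1.src⟩ else Sum.inr (r, i)), ⟨(b, acc)⟩)
        (rest.map fun a => ((⟨r.1.tag⟩ : RE A), [a]))
        (Sum.inl ⟨r.1.tgt⟩, ⟨(r.1.update b (acc ++ rest), [])⟩) := by
  intro rest
  induction rest with
  | nil => intro acc i h; exact absurd rfl h
  | cons a rest' ih =>
    intro acc i _ hsum hg
    simp only [List.length_cons] at hsum
    by_cases hlast : i.val + 1 = r.1.len
    · have hrest' : rest' = [] := by
        have : rest'.length = 0 := by omega
        exact List.length_eq_zero_iff.mp this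
      subst hrest'
      refine EFA.Path.cons
        ⟨chainT A m r i, Or.inr ⟨r, i, by omega, rfl⟩, rfl, ?_, rfl, ?_, ?_⟩
        (EFA.Path.nil _)
      · simp [chainT, hlast]
      · exact ⟨rfl, fun _ => hg⟩
      · simp [chainT, hlast]
    · have hne : rest' ≠ [] := by
        intro h; subst h; simp at hsum; omega
      have hi1 : i.val + 1 < m := by omega
      have hv : (i.val + 1) % m = i.val + 1 := Nat.mod_eq_of_lt hi1
      have hpath := ih (acc ++ [a]) ⟨(i.val + 1) % m, Nat.mod_lt _ i.pos⟩ hne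
        (by simp only [hv]; omega)
        (by rwa [List.append_assoc, List.singleton_append])
      rw [if_neg (by simp only [hv]; omega), List.append_assoc,
        List.singleton_append] at hpath
      refine EFA.Path.cons
        ⟨chainT A m r i, Or.inr ⟨r, i, by omega, rfl⟩, rfl, ?_, rfl, ?_, ?_⟩ hpath
      · simp [chainT, hlast]
      · exact ⟨rfl, fun h => absurd h hlast⟩
      · simp [chainT, hlast]

lemma fwd (hm : 1 < m) (hlen : ∀ r ∈ A.trans, r.len ≤ m) :
    ∀ {c u c'}, A.Path c u c' →
      ∃ u1, (red A m).Path (Sum.inl ⟨c.1⟩, ⟨(c.2, [])⟩) u1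
          (Sum.inl ⟨c'.1⟩, ⟨(c'.2, [])⟩) ∧
        flatData u1 = flatData u := by
  intro c u c' hp
  induction hp with
  | nil => exact ⟨[], EFA.Path.nil _, rfl⟩
  | cons hs _ ih =>
    rename_i c1 c2 c3 ev u' _
    obtain ⟨u1, hpath1, hflat1⟩ := ih
    obtain ⟨r, hr, hsrc, htgt, htag, hg, hupd⟩ := hs
    have hlg := r.guard_len _ hg
    by_cases hev : ev.2 = []
    · have hlen0 : r.len = 0 := by rw [hev] at hlg; exact hlg.symm
      refine ⟨(⟨r.tag⟩, []) :: u1, EFA.Path.cons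
        ⟨zeroT A m ⟨r, hr⟩, Or.inl ⟨⟨r, hr⟩, hlen0, rfl⟩, ?_, ?_, rfl, ?_, ?_⟩
        hpath1, ?_⟩
      · simp [zeroT, hsrc]
      · simp [zeroT, htgt]
      · exact ⟨rfl, by rwa [hev] at hg⟩
      · simp [zeroT, hupd, hev]
      · simp [flatData_cons, hflat1, hev]
    · have hchain := chain_path A m ⟨r, hr⟩ (hlen r hr) c1.2 ev.2 []
        ⟨0, by omega⟩ hev (by simpa using hlg) (by simpa using hg)
      rw [if_pos rfl] at hchain
      refine ⟨(ev.2.map fun a => ((⟨r.tag⟩ : RE A), [a])) ++ u1, ?_, ?_⟩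
      · refine EFA.Path.append ?_ hpath1
        rw [hsrc] at hchain
        simp only at hchain
        have h2 : r.tgt = c2.1 := htgt
        have h3 : (r.update c1.2 ([] ++ ev.2)) = c2.2 := by
          simpa using hupd.symm
        rw [h2, h3] at hchain
        exact hchain
      · simp [flatData_append, flatData_map_single, flatData_cons, hflat1]

lemma bwd : ∀ (n : ℕ) (u : List (RE A × List X)), u.length ≤ n →
    ((∀ (q : Q) (b : Y) (qM : Q) (yM : RY A),
        (red A m).Path (Sum.inl ⟨q⟩, ⟨(b, [])⟩) u (Sum.inl ⟨qM⟩, yM) →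
        ∃ bM v, yM = ⟨(bM, [])⟩ ∧ A.Path (q, b) v (qM, bM) ∧
          flatData u = flatData v) ∧
     (∀ (r : ↥A.trans) (i : Fin m) (b : Y) (acc : List X) (qM : Q) (yM : RY A),
        (red A m).Path (Sum.inr (r, i), ⟨(b, acc)⟩) u (Sum.inl ⟨qM⟩, yM) →
        ∃ rest bM v, (b, acc ++ rest) ∈ r.1.guard ∧ yM = ⟨(bM, [])⟩ ∧
          A.Path (r.1.tgt, r.1.update b (acc ++ rest)) v (qM, bM) ∧
          flatData u = rest ++ flatData v)) := by
  intro n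
  induction n with
  | zero =>
    intro u hu
    have : u = [] := List.length_eq_zero_iff.mp (Nat.le_zero.mp hu)
    subst this
    constructor
    · intro q b qM yM hp
      cases hp
      exact ⟨b, [], rfl, EFA.Path.nil _, rfl⟩
    · intro r i b acc qM yM hp
      cases hp
  | succ n ih =>
    intro u hu
    constructor
    · intro q b qM yM hp
      cases hp with
      | nil => exact ⟨b, [], rfl, EFA.Path.nil _, rfl⟩
      | cons hs hp' =>
        rename_i cmid ev u'
        obtain ⟨cm1, cm2⟩ := cmid
        obtain ⟨t, ht, hsrc, htgt, htag, hg, hupd⟩ := hs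
        simp only [List.length_cons] at hu
        rcases ht with ⟨r, hr0, rfl⟩ | ⟨r, i, hi, rfl⟩
        · -- zero-length transition
          simp only [zeroT] at hsrc htgt hg hupd
          obtain ⟨hev, hgB⟩ := hg
          have hq : r.1.src = q := by simpa using hsrc
          rw [← htgt, hupd] at hp'
          obtain ⟨bM, v, hyM, hAp, hflat⟩ :=
            (ih u' (by omega)).1 r.1.tgt (r.1.update b []) qM yM hp'
          have hev2 : ev.2 = [] := hev
          refine ⟨bM, (r.1.tag, []) :: v, hyM,
            EFA.Path.cons ⟨r.1, r.2, hq, rfl, rfl, hgB, rfl⟩ hAp, ?_⟩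
          simp [flatData_cons, hflat, hev2]
        · -- chain transition
          by_cases hi0 : i.val = 0
          · have hq : r.1.src = q := by
              simp only [chainT, hi0, if_pos] at hsrc; simpa using hsrc
            obtain ⟨hev1, hgB⟩ := hg
            by_cases h1 : i.val + 1 = r.1.len
            · simp only [chainT, if_pos h1] at htgt hupd
              rw [← htgt, hupd] at hp'
              have hgB' : (b, ev.2) ∈ r.1.guard := by simpa using hgB h1
              obtain ⟨bM, v, hyM, hAp, hflat⟩ :=
                (ih u' (by omega)).1 r.1.tgt (r.1.update b ([] ++ ev.2)) qM yM hp'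
              refine ⟨bM, (r.1.tag, ev.2) :: v, hyM,
                EFA.Path.cons ⟨r.1, r.2, hq, rfl, rfl, hgB', rfl⟩
                  (by simpa using hAp), ?_⟩
              simp [flatData_cons, hflat]
            · simp only [chainT, if_neg h1] at htgt hupd
              rw [← htgt, hupd] at hp'
              obtain ⟨rest, bM, v, hgA, hyM, hAp, hflat⟩ :=
                (ih u' (by omega)).2 r ⟨(i.val + 1) % m, Nat.mod_lt _ i.pos⟩ b ([] ++ ev.2) qM yM hp'
              refine ⟨bM, (r.1.tag, ev.2 ++ rest) :: v, hyM,
                EFA.Path.cons ⟨r.1, r.2, hq, rfl, rfl, by simpa using hgA,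
                  rfl⟩ (by simpa using hAp), ?_⟩
              simp [flatData_cons, hflat]
          · exfalso
            simp [chainT, hi0] at hsrc
    · intro r i b acc qM yM hp
      cases hp with
      | cons hs hp' =>
        rename_i cmid ev u'
        obtain ⟨cm1, cm2⟩ := cmid
        obtain ⟨t, ht, hsrc, htgt, htag, hg, hupd⟩ := hs
        simp only [List.length_cons] at hu
        rcases ht with ⟨r', hr0, rfl⟩ | ⟨r', i', hi', rfl⟩
        · exfalso; simp [zeroT] at hsrc
        · by_cases hi0 : i'.val = 0
          · exfalso; simp [chainT, hi0] at hsrc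
          · simp only [chainT, if_neg hi0] at hsrc
            obtain ⟨hrr, hii⟩ := Prod.mk.inj (Sum.inr.inj hsrc)
            replace hrr := hrr.symm; replace hii := hii.symm
            subst hrr; subst hii
            obtain ⟨hev1, hgB⟩ := hg
            by_cases h1 : i.val + 1 = r.1.len
            · simp only [chainT, if_pos h1] at htgt hupd
              rw [← htgt, hupd] at hp'
              have hgA : (b, acc ++ ev.2) ∈ r.1.guard := by simpa using hgB h1
              obtain ⟨bM, v, hyM, hAp, hflat⟩ :=
                (ih u' (by omega)).1 r.1.tgt (r.1.update b (acc ++ ev.2)) qM yM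
                  (by simpa using hp')
              exact ⟨ev.2, bM, v, hgA, hyM, hAp, by simp [flatData_cons, hflat]⟩
            · simp only [chainT, if_neg h1] at htgt hupd
              rw [← htgt, hupd] at hp'
              obtain ⟨rest, bM, v, hgA, hyM, hAp, hflat⟩ :=
                (ih u' (by omega)).2 r ⟨(i.val + 1) % m, Nat.mod_lt _ i.pos⟩ b (acc ++ ev.2) qM yM
                  (by simpa using hp')
              refine ⟨ev.2 ++ rest, bM, v, ?_, hyM, ?_, ?_⟩
              · rwa [← List.append_assoc]
              · rwa [← List.append_assoc]
              · simp [flatData_cons, hflat]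

end Reduction

/-- For every EFA `A` of step-length `m > 1` over the event-parameter domain
`X` there exists a data-equivalent EFA of step-length `1` (over possibly
different state tags, event tags and state-parameter domain). -/
theorem efa_step_length_reduction [Finite Q] [Finite E] (A : EFA Q E X Y)
    (hT : A.trans.Finite) (m : ℕ) (hm : 1 < m) (hlen : ∀ r ∈ A.trans, r.len ≤ m) :
    ∃ (Q' : Type (max u v w y)) (E' : Type (max u v w y)) (Y' : Type (max u v w y))
      (_ : Finite Q') (_ : Finite E') (A1 : EFA Q' E' X Y'),
      A1.trans.Finite ∧ (∀ r ∈ A1.trans, r.len ≤ 1) ∧ A1.Lfmd = A.Lfmd := by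
  have : Finite ↥A.trans := hT.to_subtype
  refine ⟨RQ A m, RE A, RY A, inferInstance, inferInstance, red A m, ?_, ?_, ?_⟩
  · refine Set.Finite.subset ((Set.finite_range (zeroT A m)).union
      (Set.finite_range fun p : ↥A.trans × Fin m => chainT A m p.1 p.2)) ?_
    rintro t (⟨r, _, rfl⟩ | ⟨r, i, _, rfl⟩)
    · exact Or.inl ⟨r, rfl⟩
    · exact Or.inr ⟨(r, i), rfl⟩
  · rintro t (⟨r, _, rfl⟩ | ⟨r, i, _, rfl⟩)
    · exact Nat.zero_le 1
    · exact le_rfl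
  · ext w
    constructor
    · rintro ⟨u1, ⟨q0', hq0, b0', hb0, qm', hqm, bfin, hpath⟩, rfl⟩
      obtain ⟨_, ⟨q0, hq0A, rfl⟩, rfl⟩ := hq0
      obtain ⟨b0, hb0A, rfl⟩ := hb0
      obtain ⟨_, ⟨qm, hqmA, rfl⟩, rfl⟩ := hqm
      obtain ⟨bM, v, _, hAp, hflat⟩ :=
        (bwd A m u1.length u1 le_rfl).1 q0 b0 qm bfin hpath
      exact ⟨v, ⟨q0, hq0A, b0, hb0A, qm, hqmA, bM, hAp⟩, hflat.symm⟩
    · rintro ⟨u, ⟨q0, hq0, b0, hb0, qm, hqm, b, hpath⟩, rfl⟩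
      obtain ⟨u1, hpath1, hflat1⟩ := fwd A m hm hlen hpath
      exact ⟨u1, ⟨Sum.inl ⟨q0⟩, ⟨⟨q0⟩, ⟨q0, hq0, rfl⟩, rfl⟩,
        ⟨(b0, [])⟩, ⟨b0, hb0, rfl⟩,
        Sum.inl ⟨qm⟩, ⟨⟨qm⟩, ⟨qm, hqm, rfl⟩, rfl⟩,
        ⟨(b, [])⟩, hpath1⟩, hflat1⟩
end

section
/- Let S be an EP-EFA with static observation function θ and let Sʳ be its reverse (with initial-state set Q₀ʳ = Q). For every w ∈ Θ(S) and every ŵʳ ∈ Θ(Sʳ): Est^S(w) ∩ Est^{Sʳ}(ŵʳ) = { q̂ ∈ Q : there exist q₀ ∈ Q₀, q ∈ Q and parameterized strings u, û with q₀ →u q̂ in S, q̂ →û q in S, θ(D(u)) = w and θ(D(û)) = ŵ }. -/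
attribute [local instance] Classical.propDecidable

universe u v w

variable {Q : Type u} {E : Type v} {X : Type w}

lemma EPEFA.Path.append {S : EPEFA Q E X} {q q' q'' : Q}
    {u v : List (E × List X)} (h1 : S.Path q u q') (h2 : S.Path q' v q'') :
    S.Path q (u ++ v) q'' := by
  induction h1 with
  | nil => simpa using h2
  | cons hs _ ih => exact EPEFA.Path.cons hs (ih h2)

lemma step_rev {S : EPEFA Q E X} {q q' : Q} {ev : E × List X}
    (h : S.Step q ev q') : S.rev.Step q' (ev.1, ev.2.reverse) q := by
  obtain ⟨t, ht, hs, htg, hta, hg⟩ := h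
  exact ⟨t.rev, ⟨t, ht, rfl⟩, by simp [SymTrans.rev, hs, htg, hta, hg]⟩

lemma step_unrev {S : EPEFA Q E X} {q q' : Q} {ev : E × List X}
    (h : S.rev.Step q ev q') : S.Step q' (ev.1, ev.2.reverse) q := by
  obtain ⟨t', ht', hs, htg, hta, hg⟩ := h
  obtain ⟨t, ht, rfl⟩ := ht'
  simp [SymTrans.rev] at hs htg hta hg
  exact ⟨t, ht, by simp [hs, htg, hta, hg]⟩

lemma strRev_cons (ev : E × List X) (u : List (E × List X)) :
    strRev (ev :: u) = strRev u ++ [(ev.1, ev.2.reverse)] := by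
  simp [strRev]

lemma path_rev {S : EPEFA Q E X} {q q' : Q} {u : List (E × List X)}
    (h : S.Path q u q') : S.rev.Path q' (strRev u) q := by
  induction h with
  | nil q => exact EPEFA.Path.nil q
  | cons hs _ ih =>
      rw [strRev_cons]
      exact ih.append (EPEFA.Path.cons (step_rev hs) (EPEFA.Path.nil _))

lemma path_unrev {S : EPEFA Q E X} {q q' : Q} {u : List (E × List X)}
    (h : S.rev.Path q u q') : S.Path q' (strRev u) q := by
  induction h with
  | nil q => exact EPEFA.Path.nil q
  | cons hs _ ih =>
      rw [strRev_cons]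
      exact ih.append (EPEFA.Path.cons (step_unrev hs) (EPEFA.Path.nil _))

lemma obsOf_strRev (ϑ : Set X) (u : List (E × List X)) :
    obsOf ϑ (strRev u) = obsRev (obsOf ϑ u) := by
  simp only [obsOf, strRev, obsRev, List.map_reverse, List.map_map,
    List.filter_reverse, Function.comp]
  congr 1
  induction u with
  | nil => simp
  | cons ev u ih =>
      by_cases h : List.filter (fun a => decide (a ∈ ϑ)) ev.2 = []
      · simp [List.filter_cons, h, Function.comp]
        simpa using ih
      · have h' : (List.filter (fun a => decide (a ∈ ϑ)) ev.2).reverse ≠ [] := by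
          simpa using h
        simp [List.filter_cons, h, h', Function.comp]
        simpa using ih

lemma obsRev_obsRev (w : List (List X)) : obsRev (obsRev w) = w := by
  simp [obsRev, List.map_reverse, List.map_map, Function.comp]

/-- Two-way characterization of the intersected state estimations: for every
`w ∈ Θ(S)` and every `ŵʳ ∈ Θ(Sʳ)` (with `ŵ = w2`),
`Est^S(w) ∩ Est^{Sʳ}(ŵʳ)` consists of exactly the states `q̂` admitting a run
`q₀ →u q̂ →û q` in `S` with `q₀` initial, `θ(D(u)) = w` and `θ(D(û)) = ŵ`. -/
theorem est_inter_rev_est (S : EPEFA Q E X) (ϑ : Set X)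
    (w : List (List X)) (hw : w ∈ S.ThetaSet ϑ)
    (w2 : List (List X)) (hw2 : obsRev w2 ∈ S.rev.ThetaSet ϑ) :
    S.Est ϑ w ∩ S.rev.Est ϑ (obsRev w2) =
      {qh : Q | ∃ q0 ∈ S.init, ∃ (q : Q) (u u2 : List (E × List X)),
        S.Path q0 u qh ∧ S.Path qh u2 q ∧
        obsOf ϑ u = w ∧ obsOf ϑ u2 = w2} := by
  ext qh
  constructor
  · rintro ⟨⟨q0, hq0, u, hu, hou⟩, ⟨q0', -, v, hv, hov⟩⟩
    refine ⟨q0, hq0, q0', u, strRev v, hu, path_unrev hv, hou, ?_⟩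
    rw [obsOf_strRev, hov, obsRev_obsRev]
  · rintro ⟨q0, hq0, q, u, u2, h1, h2, ho1, ho2⟩
    refine ⟨⟨q0, hq0, u, h1, ho1⟩, ⟨q, trivial, strRev u2, path_rev h2, ?_⟩⟩
    rw [obsOf_strRev, ho2]
end
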